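/- arXiv:1010.4182 — 2 statements merged into one kernel-verified Lean document; each statement's English description precedes it below -/
import Mathlib

section
/- Let K : ℝ → ℝ be supported on [−A, A], Lipschitz on [−A, A] with bounded derivative, with K(−A)² + K(A)² > 0, and λ_K = ∫ K² > 0. Then as s → 0⁺, ∫ (K(x) − K(x+s))² dx = (K(−A)² + K(A)²) s + o(s); consequently r(s) = 1 − K₁ s + o(s) where r(s) = λ_K⁻¹ ∫ K(x)K(x+s) dx and K₁ = (K(−A)² + K(A)²)/(2λ_K). -/
/-!
On `[a - s, a]` and `[b - s, b]` only one of `K x`, `K (x + s)` is nonzero, so these parts of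
`∫ (K x - K (x + s))²` are `∫_a^{a+s} K²` and `∫_{b-s}^b K²`, which equal `K(a)² s + o(s)` and
`K(b)² s + o(s)` by the fundamental theorem of calculus, `K²` being continuous on `[a, b]`.
On `[a, b - s]` the Lipschitz bound makes the integrand at most `(L s)²`, an `O(s²)` term.
The expansion of `r(s)` follows from `∫ (K x - K (x + s))² = 2 λ_K - 2 ∫ K x K (x + s)`,
which holds because `∫ K (x + s)² = λ_K` by translation invariance.
-/

open MeasureTheory Filter Asymptotics Set Topology
open scoped ENNReal NNReal

variable {f K : ℝ → ℝ} {a b : ℝ} {L : ℝ≥0}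

theorem ContinuousOn.isLittleO_integral_left_endpoint (hab : a < b)
    (hf : ContinuousOn f (Icc a b)) :
    (fun s => (∫ x in a..a + s, f x) - f a * s) =o[𝓝[>] 0] fun s => s := by
  -- selects the `FTCFilter` instance for `𝓝[Icc a b] a`
  have : Fact (a ∈ Icc a b) := ⟨left_mem_Icc.2 hab.le⟩
  have hderiv : HasDerivWithinAt (fun u => ∫ x in a..u, f x) (f a) (Icc a b) a :=
    intervalIntegral.integral_hasDerivWithinAt_right IntervalIntegrable.refl
      (hf.stronglyMeasurableAtFilter_nhdsWithin measurableSet_Icc a) (hf a this.out)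
  have hshift : Tendsto (fun s => a + s) (𝓝[>] 0) (𝓝[Icc a b] a) := by
    refine tendsto_nhdsWithin_of_tendsto_nhds_of_eventually_within _ ?_ ?_
    · exact ((continuous_const_add a).tendsto' 0 a (add_zero a)).mono_left nhdsWithin_le_nhds
    · filter_upwards [Ioo_mem_nhdsGT (sub_pos.2 hab)] with s hs
      exact ⟨by linarith [hs.1], by linarith [hs.2]⟩
  refine ((hasDerivWithinAt_iff_isLittleO.1 hderiv).comp_tendsto hshift).congr
    (fun s => ?_) (fun s => ?_) <;> simp [mul_comm]

theorem ContinuousOn.isLittleO_integral_right_endpoint (hab : a < b)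
    (hf : ContinuousOn f (Icc a b)) :
    (fun s => (∫ x in b - s..b, f x) - f b * s) =o[𝓝[>] 0] fun s => s := by
  have hneg : ContinuousOn (fun x => f (-x)) (Icc (-b) (-a)) :=
    hf.comp continuousOn_neg fun x hx => ⟨by linarith [hx.2], by linarith [hx.1]⟩
  refine (hneg.isLittleO_integral_left_endpoint (neg_lt_neg hab)).congr_left fun s => ?_
  rw [intervalIntegral.integral_comp_neg, neg_neg, neg_add, neg_neg, ← sub_eq_add_neg]

theorem ContinuousOn.memLp_of_forall_compl_eq_zero (hK : ContinuousOn K (Icc a b))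
    (hsupp : ∀ x, x ∉ Icc a b → K x = 0) (p : ℝ≥0∞) : MemLp K p volume := by
  obtain ⟨C, hC⟩ := isCompact_Icc.exists_bound_of_continuousOn hK
  rw [← indicator_eq_self.2 (Function.support_subset_iff'.2 hsupp),
    memLp_indicator_iff_restrict measurableSet_Icc]
  exact .of_bound (hK.aestronglyMeasurable measurableSet_Icc) C
    ((ae_restrict_iff' measurableSet_Icc).2 (.of_forall hC))

theorem MemLp.integral_sq_sub_comp_add (hK : MemLp K 2 volume) (s : ℝ) :
    ∫ x, (K x - K (x + s)) ^ 2 = 2 * (∫ x, K x ^ 2) - 2 * ∫ x, K x * K (x + s) := by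
  have hKs : MemLp (fun x => K (x + s)) 2 volume :=
    hK.comp_measurePreserving (measurePreserving_add_right volume s)
  have hexpand : (fun x => (K x - K (x + s)) ^ 2)
      = fun x => (K x ^ 2 + K (x + s) ^ 2) - 2 * (K x * K (x + s)) := by
    ext x; ring
  have hsq : Integrable (fun x => K x ^ 2 + K (x + s) ^ 2) volume :=
    hK.integrable_sq.add hKs.integrable_sq
  have hmul : Integrable (fun x => K x * K (x + s)) volume := hK.integrable_mul hKs
  rw [hexpand, integral_sub hsq (hmul.const_mul 2), integral_add hK.integrable_sq
    hKs.integrable_sq, integral_add_right_eq_self (fun x => K x ^ 2) s, integral_const_mul]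
  ring

theorem integral_sq_sub_comp_add_eq_of_forall_compl_eq_zero
    (hsupp : ∀ x, x ∉ Icc a b → K x = 0) (hK : MemLp K 2 volume) {s : ℝ} (hs : 0 ≤ s)
    (hsb : s ≤ b - a) :
    ∫ x, (K x - K (x + s)) ^ 2 = (∫ x in a..a + s, K x ^ 2) + (∫ x in b - s..b, K x ^ 2)
      + ∫ x in a..b - s, (K x - K (x + s)) ^ 2 := by
  have hg : Integrable (fun x => (K x - K (x + s)) ^ 2) volume :=
    (hK.sub (hK.comp_measurePreserving (measurePreserving_add_right volume s))).integrable_sq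
  have hvanish : ∀ x, x ∉ Icc (a - s) b → (K x - K (x + s)) ^ 2 = 0 := by
    intro x hx
    rw [mem_Icc, not_and_or, not_le, not_le] at hx
    rw [hsupp x fun h => by rcases hx with hx | hx <;> linarith [h.1, h.2],
      hsupp (x + s) fun h => by rcases hx with hx | hx <;> linarith [h.1, h.2]]
    ring
  have hleft : ∫ x in a - s..a, (K x - K (x + s)) ^ 2 = ∫ x in a..a + s, K x ^ 2 := by
    rw [intervalIntegral.integral_congr_uIoo (g := fun x => K (x + s) ^ 2),
      intervalIntegral.integral_comp_add_right (fun x => K x ^ 2), sub_add_cancel]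
    intro x hx
    rw [uIoo_of_le (by linarith)] at hx
    simp [hsupp x fun h => by linarith [h.1, hx.2]]
  have hright : ∫ x in b - s..b, (K x - K (x + s)) ^ 2 = ∫ x in b - s..b, K x ^ 2 := by
    refine intervalIntegral.integral_congr_uIoo fun x hx => ?_
    rw [uIoo_of_le (by linarith)] at hx
    simp [hsupp (x + s) fun h => by linarith [h.2, hx.1]]
  rw [← setIntegral_eq_integral_of_forall_compl_eq_zero hvanish, integral_Icc_eq_integral_Ioc,
    ← intervalIntegral.integral_of_le (by linarith),
    ← intervalIntegral.integral_add_adjacent_intervals (b := a) hg.intervalIntegrable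
      hg.intervalIntegrable, hleft,
    ← intervalIntegral.integral_add_adjacent_intervals (b := b - s) hg.intervalIntegrable
      hg.intervalIntegrable, hright]
  ring

theorem LipschitzOnWith.abs_integral_sq_sub_comp_add_le (hlip : LipschitzOnWith L K (Icc a b))
    {s : ℝ} (hs : 0 ≤ s) (hsb : s ≤ b - a) :
    |∫ x in a..b - s, (K x - K (x + s)) ^ 2| ≤ (L * s) ^ 2 * (b - a) := by
  have hbound : ∀ x ∈ uIoc a (b - s), ‖(K x - K (x + s)) ^ 2‖ ≤ (L * s) ^ 2 := by
    intro x hx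
    rw [uIoc_of_le (by linarith)] at hx
    have hdist := hlip.dist_le_mul x ⟨hx.1.le, by linarith [hx.2]⟩ (x + s)
      ⟨by linarith [hx.1], by linarith [hx.2]⟩
    rw [Real.dist_eq, Real.dist_eq, sub_add_cancel_left, abs_neg, abs_of_nonneg hs] at hdist
    rw [norm_pow, Real.norm_eq_abs]
    exact pow_le_pow_left₀ (abs_nonneg _) hdist 2
  calc |∫ x in a..b - s, (K x - K (x + s)) ^ 2|
      ≤ (L * s) ^ 2 * |b - s - a| := intervalIntegral.norm_integral_le_of_norm_le_const hbound
    _ ≤ (L * s) ^ 2 * (b - a) := by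
      gcongr
      rw [abs_of_nonneg (by linarith)]
      linarith

theorem isLittleO_integral_sq_sub_comp_add (hab : a < b) (hsupp : ∀ x, x ∉ Icc a b → K x = 0)
    (hlip : LipschitzOnWith L K (Icc a b)) :
    (fun s => (∫ x, (K x - K (x + s)) ^ 2) - (K a ^ 2 + K b ^ 2) * s)
      =o[𝓝[>] 0] fun s => s := by
  have hsq : ContinuousOn (fun x => K x ^ 2) (Icc a b) := hlip.continuousOn.pow 2
  have hsmall : ∀ᶠ s in 𝓝[>] 0, s ∈ Ioo 0 (b - a) := Ioo_mem_nhdsGT (sub_pos.2 hab)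
  have hmiddle : (fun s => ∫ x in a..b - s, (K x - K (x + s)) ^ 2) =o[𝓝[>] 0] fun s => s := by
    refine IsBigO.trans_isLittleO (g := fun s => s ^ 2) ?_
      ((isLittleO_pow_id one_lt_two).mono nhdsWithin_le_nhds)
    refine .of_bound (L ^ 2 * (b - a)) ?_
    filter_upwards [hsmall] with s hs
    rw [Real.norm_eq_abs, norm_pow, Real.norm_eq_abs, sq_abs]
    linarith [hlip.abs_integral_sq_sub_comp_add_le hs.1.le hs.2.le]
  refine (((hsq.isLittleO_integral_left_endpoint hab).add
    (hsq.isLittleO_integral_right_endpoint hab)).add hmiddle).congr' ?_ .rfl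
  filter_upwards [hsmall] with s hs
  rw [integral_sq_sub_comp_add_eq_of_forall_compl_eq_zero hsupp
    (hlip.continuousOn.memLp_of_forall_compl_eq_zero hsupp 2) hs.1.le hs.2.le]
  ring

theorem kernel_increment_sq_asymp_general (K : ℝ → ℝ) (A : ℝ) (hA : 0 < A) (L : NNReal)
    (hsupp : ∀ x, x ∉ Set.Icc (-A) A → K x = 0)
    (hlip : LipschitzOnWith L K (Set.Icc (-A) A))
    (hlam : 0 < ∫ x, (K x) ^ 2) :
    (fun s : ℝ => (∫ x, (K x - K (x + s)) ^ 2) - (K (-A) ^ 2 + K A ^ 2) * s)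
        =o[nhdsWithin 0 (Set.Ioi 0)] (fun s : ℝ => s)
    ∧ (fun s : ℝ =>
          (∫ x, K x * K (x + s)) / (∫ x, (K x) ^ 2)
            - (1 - (K (-A) ^ 2 + K A ^ 2) / (2 * ∫ x, (K x) ^ 2) * s))
        =o[nhdsWithin 0 (Set.Ioi 0)] (fun s : ℝ => s) := by
  have hincrement := isLittleO_integral_sq_sub_comp_add (neg_lt_self hA) hsupp hlip
  refine ⟨hincrement,
    (hincrement.const_mul_left (-(2 * ∫ x, K x ^ 2)⁻¹)).congr_left fun s => ?_⟩
  rw [MemLp.integral_sq_sub_comp_add (hlip.continuousOn.memLp_of_forall_compl_eq_zero hsupp 2)]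
  field_simp [hlam.ne']
  ring

/-- For a Lipschitz kernel `K` supported on `[-A, A]` with bounded derivative and
`K(−A)² + K(A)² > 0`, `λ_K = ∫ K² > 0`, as `s → 0⁺`:
`∫ (K(x) − K(x+s))² dx = (K(−A)² + K(A)²) s + o(s)`, and consequently
`r(s) = 1 − K₁ s + o(s)` with `K₁ = (K(−A)² + K(A)²)/(2 λ_K)`. -/
theorem kernel_increment_sq_asymp (K : ℝ → ℝ) (A : ℝ) (hA : 0 < A) (L : NNReal)
    (hsupp : ∀ x, x ∉ Set.Icc (-A) A → K x = 0)
    (hlip : LipschitzOnWith L K (Set.Icc (-A) A))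
    (hdiff : DifferentiableOn ℝ K (Set.Ioo (-A) A))
    (hderiv_bdd : ∃ M, ∀ x ∈ Set.Ioo (-A) A, |derivWithin K (Set.Ioo (-A) A) x| ≤ M)
    (hK2 : Integrable (fun x => (K x) ^ 2))
    (hend : 0 < K (-A) ^ 2 + K A ^ 2)
    (hlam : 0 < ∫ x, (K x) ^ 2) :
    (fun s : ℝ => (∫ x, (K x - K (x + s)) ^ 2) - (K (-A) ^ 2 + K A ^ 2) * s)
        =o[nhdsWithin 0 (Set.Ioi 0)] (fun s : ℝ => s)
    ∧ (fun s : ℝ =>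
          (∫ x, K x * K (x + s)) / (∫ x, (K x) ^ 2)
            - (1 - (K (-A) ^ 2 + K A ^ 2) / (2 * ∫ x, (K x) ^ 2) * s))
        =o[nhdsWithin 0 (Set.Ioi 0)] (fun s : ℝ => s) :=
  kernel_increment_sq_asymp_general K A hA L hsupp hlip hlam
end

section
/- Let K : ℝ → ℝ be a bounded kernel supported on [−1,1] and f a bounded density on ℝ with bounded derivatives up to order 2. If X has density f, then for each fixed s, t and bandwidth b > 0, |E[K(X/b − s) K(X/b − t)] − b √(f(bs) f(bt)) λ_K r(s − t)| ≤ C b², where λ_K = ∫K², r(u) = λ_K⁻¹ ∫ K(x) K(x+u) dx, and C depends only on K and the bounds on f and its derivatives. -/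
open MeasureTheory Set

/-!
Substituting `x = b (y + s)` turns the expectation into `b ∫ K(y) K(y + s - t) f(b (y + s)) dy`.
The integrand vanishes unless `|y| ≤ 1` and `|s - t| ≤ 2`. There `f(b (y + s))` is within `M b`
of `f(b s)` by the mean value theorem, and the geometric mean `√(f(bs) f(bt))` is within
`|f(bt) - f(bs)| ≤ 2 M b` of `f(bs)`, so the difference is `b · O(b)`. The factor `λ_K · λ_K⁻¹`
cancels even when `λ_K = 0`, because a continuous `K` with `∫ K² = 0` vanishes.
-/

lemma abs_sqrt_mul_sub_le {p q : ℝ} (hp : 0 ≤ p) (hq : 0 ≤ q) :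
    |√(p * q) - p| ≤ |q - p| := by
  have hpp : √p * √p = p := Real.mul_self_sqrt hp
  have hqq : √q * √q = q := Real.mul_self_sqrt hq
  have hlhs : |√(p * q) - p| = √p * |√q - √p| := by
    rw [Real.sqrt_mul hp, show √p * √q - p = √p * (√q - √p) by linear_combination hpp,
      abs_mul, abs_of_nonneg (Real.sqrt_nonneg p)]
  have hrhs : |q - p| = (√q + √p) * |√q - √p| := by
    rw [show q - p = (√q + √p) * (√q - √p) by linear_combination hpp - hqq, abs_mul,
      abs_of_nonneg (by positivity)]
  rw [hlhs, hrhs]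
  gcongr
  exact le_add_of_nonneg_left (Real.sqrt_nonneg q)

lemma abs_sub_sqrt_mul_le {f : ℝ → ℝ} {M : ℝ} (hf0 : ∀ x, 0 ≤ f x)
    (hf : ∀ x y, |f x - f y| ≤ M * |x - y|) (x y z : ℝ) :
    |f z - √(f x * f y)| ≤ M * (|z - x| + |y - x|) :=
  calc |f z - √(f x * f y)| ≤ |f z - f x| + |√(f x * f y) - f x| :=
        (abs_sub_le _ (f x) _).trans_eq (by rw [abs_sub_comm (f x)])
    _ ≤ M * |z - x| + M * |y - x| :=
      add_le_add (hf z x) ((abs_sqrt_mul_sub_le (hf0 x) (hf0 y)).trans (hf y x))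
    _ = M * (|z - x| + |y - x|) := by ring

lemma abs_sub_le_of_abs_deriv_le {f : ℝ → ℝ} {M : ℝ} (hf : Differentiable ℝ f)
    (hM : ∀ x, |deriv f x| ≤ M) (x y : ℝ) : |f x - f y| ≤ M * |x - y| :=
  convex_univ.norm_image_sub_le_of_norm_deriv_le (fun z _ => hf z) (fun z _ => hM z)
    (mem_univ y) (mem_univ x)

lemma integral_eq_abs_smul_integral_comp_mul_add {E : Type*} [NormedAddCommGroup E]
    [NormedSpace ℝ E] (F : ℝ → E) {b : ℝ} (hb : b ≠ 0) (s : ℝ) :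
    ∫ x, F x = |b| • ∫ y, F (b * (y + s)) := by
  rw [integral_add_right_eq_self (fun y => F (b * y)) s, Measure.integral_comp_mul_left,
    smul_smul, abs_inv, mul_inv_cancel₀ (abs_ne_zero.2 hb), one_smul]

lemma integral_mul_sub_const {α : Type*} [MeasurableSpace α] {μ : Measure α} {g h : α → ℝ}
    (hgh : Integrable (fun x => g x * h x) μ) (hg : Integrable g μ) (c : ℝ) :
    ∫ x, g x * (h x - c) ∂μ = ∫ x, g x * h x ∂μ - c * ∫ x, g x ∂μ := by
  simp_rw [mul_sub]
  rw [integral_sub hgh (hg.mul_const c), integral_mul_const, mul_comm]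

lemma eq_zero_of_integral_sq_eq_zero {X : Type*} [TopologicalSpace X] [MeasurableSpace X]
    [OpensMeasurableSpace X] {μ : Measure X} [μ.IsOpenPosMeasure] [IsFiniteMeasureOnCompacts μ]
    {K : X → ℝ} (hK : Continuous K) (hKc : HasCompactSupport K) (h : ∫ x, K x ^ 2 ∂μ = 0) :
    K = 0 := by
  funext x
  by_contra hx
  have hK2 : HasCompactSupport fun y => K y ^ 2 := hKc.comp_left (zero_pow two_ne_zero)
  exact ((hK.pow 2).integral_pos_of_hasCompactSupport_nonneg_nonzero (μ := μ) hK2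
    (fun y => sq_nonneg (K y)) (pow_ne_zero 2 hx)).ne' h

lemma abs_integral_le_of_abs_le_on_Icc {φ : ℝ → ℝ} {a c B : ℝ} (hac : a ≤ c)
    (hφ : ∀ y ∉ Icc a c, φ y = 0) (hB : ∀ y ∈ Icc a c, |φ y| ≤ B) :
    |∫ y, φ y| ≤ B * (c - a) := by
  rw [← setIntegral_eq_integral_of_forall_compl_eq_zero hφ]
  simpa [Real.volume_real_Icc_of_le hac] using
    norm_setIntegral_le_of_norm_le_const (μ := volume) measure_Icc_lt_top
      fun y hy => (Real.norm_eq_abs _).trans_le (hB y hy)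

lemma integral_kernel_mul_kernel_mul_eq (K f : ℝ → ℝ) {b : ℝ} (hb : 0 < b) (s t : ℝ) :
    ∫ x, K (x / b - s) * K (x / b - t) * f x =
      b * ∫ y, K y * K (y + (s - t)) * f (b * (y + s)) := by
  rw [integral_eq_abs_smul_integral_comp_mul_add _ hb.ne' s, abs_of_pos hb, smul_eq_mul]
  congr 2 with y
  simp only [mul_div_cancel_left₀ _ hb.ne', add_sub_cancel_right, add_sub_assoc']

lemma abs_kernel_mul_kernel_mul_sub_sqrt_le {K f : ℝ → ℝ} {M b : ℝ}
    (hsupp : ∀ x, x ∉ Icc (-1 : ℝ) 1 → K x = 0) (hKbdd : ∀ x, |K x| ≤ M) (hf0 : ∀ x, 0 ≤ f x)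
    (hf : ∀ x y, |f x - f y| ≤ M * |x - y|) (hb : 0 ≤ b) (s t y : ℝ) :
    |K y * K (y + (s - t)) * (f (b * (y + s)) - √(f (b * s) * f (b * t)))| ≤ 3 * M ^ 3 * b := by
  have hM : 0 ≤ M := (abs_nonneg _).trans (hKbdd 0)
  by_cases hK : y ∈ Icc (-1 : ℝ) 1 ∧ y + (s - t) ∈ Icc (-1 : ℝ) 1
  · obtain ⟨⟨hy₁, hy₂⟩, hyu₁, hyu₂⟩ := hK
    have hy : |y| ≤ 1 := abs_le.2 ⟨hy₁, hy₂⟩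
    have hst : |t - s| ≤ 2 := abs_le.2 ⟨by linarith, by linarith⟩
    have hfc : |f (b * (y + s)) - √(f (b * s) * f (b * t))| ≤ M * (b * 1 + b * 2) :=
      calc _ ≤ M * (|b * (y + s) - b * s| + |b * t - b * s|) :=
            abs_sub_sqrt_mul_le hf0 hf _ _ _
        _ = M * (b * |y| + b * |t - s|) := by
            rw [← mul_sub, ← mul_sub, abs_mul, abs_mul, abs_of_nonneg hb, add_sub_cancel_right]
        _ ≤ M * (b * 1 + b * 2) := by gcongr
    calc _ = |K y| * |K (y + (s - t))| * |f (b * (y + s)) - √(f (b * s) * f (b * t))| := by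
          simp only [abs_mul]
      _ ≤ M * M * (M * (b * 1 + b * 2)) := by gcongr <;> exact hKbdd _
      _ = 3 * M ^ 3 * b := by ring
  · rw [not_and_or] at hK
    rcases hK with hK | hK <;> simp only [hsupp _ hK, mul_zero, zero_mul, abs_zero] <;> positivity

theorem covariance_kernel_approx_general (K f : ℝ → ℝ) (L : NNReal) (M : ℝ)
    (hsupp : ∀ x, x ∉ Set.Icc (-1 : ℝ) 1 → K x = 0)
    (hKbdd : ∀ x, |K x| ≤ M)
    (hlip : LipschitzWith L K)
    (hf : ContDiff ℝ 2 f)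
    (hfpos : ∀ x, 0 ≤ f x)
    (hf'bdd : ∀ x, |deriv f x| ≤ M) :
    ∃ C > (0 : ℝ), ∀ (s t b : ℝ), 0 < b →
      |(∫ x, K (x / b - s) * K (x / b - t) * f x)
          - b * Real.sqrt (f (b * s) * f (b * t)) * (∫ x, (K x) ^ 2)
            * ((∫ x, K x * K (x + (s - t))) / (∫ x, (K x) ^ 2))|
        ≤ C * b ^ 2 := by
  have hM : 0 ≤ M := (abs_nonneg _).trans (hKbdd 0)
  have hKc : Continuous K := hlip.continuous
  have hKcs : HasCompactSupport K := HasCompactSupport.intro isCompact_Icc hsupp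
  have hflip := abs_sub_le_of_abs_deriv_le (hf.differentiable two_ne_zero) hf'bdd
  refine ⟨6 * M ^ 3 + 1, by positivity, fun s t b hb => ?_⟩
  set G : ℝ → ℝ := fun y => K y * K (y + (s - t))
  have hGc : Continuous G := hKc.mul (hKc.comp (continuous_add_const _))
  have hGcs : HasCompactSupport G := hKcs.mul_right
  have hGf : Integrable fun y => G y * f (b * (y + s)) :=
    (hGc.mul (by fun_prop)).integrable_of_hasCompactSupport hGcs.mul_right
  have hcancel : (∫ x, K x ^ 2) * ((∫ x, G x) / ∫ x, K x ^ 2) = ∫ x, G x :=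
    mul_div_cancel_of_imp' fun h => by simp [G, eq_zero_of_integral_sq_eq_zero hKc hKcs h]
  calc _ = b * |∫ y, G y * (f (b * (y + s)) - √(f (b * s) * f (b * t)))| := by
        rw [mul_assoc _ (∫ x, K x ^ 2), hcancel, integral_kernel_mul_kernel_mul_eq K f hb,
          integral_mul_sub_const hGf (hGc.integrable_of_hasCompactSupport hGcs), mul_assoc b,
          ← mul_sub, abs_mul, abs_of_pos hb]
    _ ≤ b * (3 * M ^ 3 * b * (1 - -1)) := by
        gcongr
        refine abs_integral_le_of_abs_le_on_Icc (by norm_num) (fun y hy => ?_)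
          fun y _ => abs_kernel_mul_kernel_mul_sub_sqrt_le hsupp hKbdd hfpos hflip hb.le s t y
        simp only [G, hsupp y hy, zero_mul]
    _ ≤ (6 * M ^ 3 + 1) * b ^ 2 := by nlinarith [sq_nonneg b]

/-- Covariance approximation (used in Lemma 4.8): for a bounded Lipschitz kernel `K`
supported on `[-1,1]` and a `C²` density `f` with bounded derivatives, there is a
constant `C` depending only on `K` and the bounds on `f`, `f'`, `f''` such that for all
`s, t` and all `b > 0`,
`|E[K(X/b − s)K(X/b − t)] − b √(f(bs)f(bt)) λ_K r(s−t)| ≤ C b²`. -/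
theorem covariance_kernel_approx (K f : ℝ → ℝ) (L : NNReal) (M : ℝ)
    (hsupp : ∀ x, x ∉ Set.Icc (-1 : ℝ) 1 → K x = 0)
    (hKbdd : ∀ x, |K x| ≤ M)
    (hlip : LipschitzWith L K)
    (hf : ContDiff ℝ 2 f)
    (hfpos : ∀ x, 0 ≤ f x)
    (hfint : ∫ x, f x = 1)
    (hfbdd : ∀ x, |f x| ≤ M)
    (hf'bdd : ∀ x, |deriv f x| ≤ M)
    (hf''bdd : ∀ x, |deriv (deriv f) x| ≤ M) :
    ∃ C > (0 : ℝ), ∀ (s t b : ℝ), 0 < b →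
      |(∫ x, K (x / b - s) * K (x / b - t) * f x)
          - b * Real.sqrt (f (b * s) * f (b * t)) * (∫ x, (K x) ^ 2)
            * ((∫ x, K x * K (x + (s - t))) / (∫ x, (K x) ^ 2))|
        ≤ C * b ^ 2 :=
  covariance_kernel_approx_general K f L M hsupp hKbdd hlip hf hfpos hf'bdd
end
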